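/- arXiv:2501.00196 — 3 statements merged into one kernel-verified Lean document; each statement's English description precedes it below -/
import Mathlib

section
/- Let G and G' be finite groups of equal order and let π ∈ bij(G,G'). Then D^π is a permutation matrix if and only if π = τ_a ∘ σ ∘ τ_b for some a ∈ G, b ∈ G', and some group isomorphism σ from G' to G; and in this case D^π = P^σ. -/
open scoped BigOperators Classical

/-- A winning correlation for the `(G,G')`-bijection game: nonnegative values,
the outputs sum to one for each pair of inputs, and the value is zero whenever
exactly one of `b = d` and `a = c` holds. -/
def IsWinningCorrelation {G G' : Type*} [Group G] [Group G'] [Fintype G] [Fintype G']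
    (p : G → G → G' → G' → ℝ) : Prop :=
  (∀ (b d : G) (a c : G'), 0 ≤ p b d a c) ∧
  (∀ a c : G', (∑ b : G, ∑ d : G, p b d a c) = 1) ∧
  (∀ (b d : G) (a c : G'), ¬(b = d ↔ a = c) → p b d a c = 0)

/-- Membership in `B̂(G,G')`: a winning correlation whose sum over all pairs of
inputs is `1` for every pair of outputs. -/
def MemBhat {G G' : Type*} [Group G] [Group G'] [Fintype G] [Fintype G']
    (p : G → G → G' → G' → ℝ) : Prop :=
  IsWinningCorrelation p ∧ ∀ b d : G, (∑ a : G', ∑ c : G', p b d a c) = 1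

/-- A `(G,G')`-invariant correlation: an element of `B̂(G,G')` whose values depend only
on the quotients `b⁻¹ * d ∈ G` and `a⁻¹ * c ∈ G'`. -/
def IsInvariantCorrelation {G G' : Type*} [Group G] [Group G'] [Fintype G] [Fintype G']
    (p : G → G → G' → G' → ℝ) : Prop :=
  MemBhat p ∧
  ∀ (b d b' d' : G) (a c a' c' : G'),
    b⁻¹ * d = b'⁻¹ * d' → a⁻¹ * c = a'⁻¹ * c' → p b d a c = p b' d' a' c'

/-- The correlation `p_G`. -/
noncomputable def pUnif (G : Type*) [Group G] [Fintype G] : G → G → G → G → ℝ :=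
  fun b d a c => if b⁻¹ * d = a⁻¹ * c then ((Fintype.card G : ℝ))⁻¹ else 0

/-- Composition of correlations. -/
def corComp {G G' G'' : Type*} [Fintype G']
    (p₁ : G → G → G' → G' → ℝ) (p₂ : G' → G' → G'' → G'' → ℝ) :
    G → G → G'' → G'' → ℝ :=
  fun b d a c => ∑ x : G', ∑ y : G', p₁ b d x y * p₂ x y a c

/-- The correlation matrix `D^p` of a `(G,G')`-invariant correlation `p`:
`D^p_{x,y} = |G| ⬝ p(b,d|a,c)` for any `b,d,a,c` with `b⁻¹d = x`, `a⁻¹c = y`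
(here realized with `b = a = e`). -/
noncomputable def corrMatrix {G G' : Type*} [Group G] [Group G'] [Fintype G]
    (p : G → G → G' → G' → ℝ) : Matrix G G' ℝ :=
  Matrix.of fun x y => (Fintype.card G : ℝ) * p 1 x 1 y

/-- The deterministic correlation `p_π` associated with a bijection `π` from `G'` to `G`. -/
noncomputable def detCor {G G' : Type*} (π : G' ≃ G) : G → G → G' → G' → ℝ :=
  fun b d a c => if b = π a ∧ d = π c then 1 else 0

/-- The permutation matrix `P^π` of a bijection `π` from `G'` to `G`. -/
noncomputable def permMatrix {G G' : Type*} (π : G' ≃ G) : Matrix G G' ℝ :=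
  Matrix.of fun x y => if x = π y then 1 else 0

/-- The matrix `D^π`: the correlation matrix of the `(G,G')`-invariant correlation
`p_G ∘ p_π ∘ p_{G'}`. -/
noncomputable def Dpi {G G' : Type*} [Group G] [Group G'] [Fintype G] [Fintype G']
    (π : G' ≃ G) : Matrix G G' ℝ :=
  corrMatrix (corComp (pUnif G) (corComp (detCor π) (pUnif G')))

lemma Dpi_apply {G G' : Type*} [Group G] [Group G'] [Fintype G] [Fintype G']
    (π : G' ≃ G) (x : G) (y : G') :
    Dpi π x y =
      ((Finset.univ.filter fun s : G => (π.symm s)⁻¹ * π.symm (s * x) = y).card : ℝ) /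
        (Fintype.card G' : ℝ) := by
  classical
  have hG : (Fintype.card G : ℝ) ≠ 0 := by
    exact_mod_cast Fintype.card_ne_zero
  unfold Dpi corrMatrix corComp pUnif detCor
  simp only [Matrix.of_apply, inv_one, one_mul]
  have inner : ∀ s t : G,
      (∑ u : G', ∑ v : G', (if s = π u ∧ t = π v then (1:ℝ) else 0) *
        (if u⁻¹ * v = y then ((Fintype.card G' : ℝ))⁻¹ else 0))
      = (if (π.symm s)⁻¹ * (π.symm t) = y then ((Fintype.card G' : ℝ))⁻¹ else 0) := by
    intro s t
    rw [Finset.sum_eq_single (π.symm s)]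
    · rw [Finset.sum_eq_single (π.symm t)]
      · simp
      · intro v _ hv
        have : t ≠ π v := fun h => hv (by simp [h])
        simp [this]
      · simp
    · intro u _ hu
      have : s ≠ π u := fun h => hu (by simp [h])
      simp [this]
    · simp
  calc (Fintype.card G : ℝ) * ∑ s : G, ∑ t : G,
        (if x = s⁻¹ * t then ((Fintype.card G : ℝ))⁻¹ else 0) *
          (∑ u : G', ∑ v : G', (if s = π u ∧ t = π v then (1:ℝ) else 0) *
            (if u⁻¹ * v = y then ((Fintype.card G' : ℝ))⁻¹ else 0))
      = (Fintype.card G : ℝ) * ∑ s : G,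
          ((Fintype.card G : ℝ))⁻¹ *
          (if (π.symm s)⁻¹ * (π.symm (s * x)) = y then ((Fintype.card G' : ℝ))⁻¹ else 0) := by
        congr 1
        refine Finset.sum_congr rfl fun s _ => ?_
        rw [Finset.sum_eq_single (s * x)]
        · rw [inner s (s * x), if_pos (show x = s⁻¹ * (s * x) by group)]
        · intro t _ ht
          have : x ≠ s⁻¹ * t := fun h => ht (by rw [h]; group)
          simp [this]
        · simp
    _ = ∑ s : G, (if (π.symm s)⁻¹ * (π.symm (s * x)) = y then ((Fintype.card G' : ℝ))⁻¹ else 0) := by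
        rw [Finset.mul_sum]
        refine Finset.sum_congr rfl fun s _ => ?_
        rw [← mul_assoc, mul_inv_cancel₀ hG, one_mul]
    _ = ((Finset.univ.filter fun s : G => (π.symm s)⁻¹ * π.symm (s * x) = y).card : ℝ) /
        (Fintype.card G' : ℝ) := by
        rw [← Finset.sum_filter, Finset.sum_const, nsmul_eq_mul, div_eq_mul_inv]

/-- `D^π` is a permutation matrix iff `π = τ_a ∘ σ ∘ τ_b` for some `a ∈ G`,
`b ∈ G'` and some group isomorphism `σ : G' → G`; and in that case `D^π = P^σ`. -/
theorem stmt4 {G G' : Type*} [Group G] [Group G'] [Fintype G] [Fintype G']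
    (hcard : Fintype.card G = Fintype.card G') (π : G' ≃ G) :
    ((∃ f : G' ≃ G, Dpi π = permMatrix f) ↔
      ∃ (a : G) (b : G') (σ : G' ≃* G),
        π = (Equiv.mulLeft b).trans (σ.toEquiv.trans (Equiv.mulLeft a))) ∧
    (∀ (a : G) (b : G') (σ : G' ≃* G),
      π = (Equiv.mulLeft b).trans (σ.toEquiv.trans (Equiv.mulLeft a)) →
      Dpi π = permMatrix σ.toEquiv) := by
  classical
  have hG' : (Fintype.card G' : ℝ) ≠ 0 := by exact_mod_cast Fintype.card_ne_zero
  have part2 : ∀ (a : G) (b : G') (σ : G' ≃* G),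
      π = (Equiv.mulLeft b).trans (σ.toEquiv.trans (Equiv.mulLeft a)) →
      Dpi π = permMatrix σ.toEquiv := by
    intro a b σ hπ
    have hsymm : ∀ s : G, π.symm s = b⁻¹ * σ.symm (a⁻¹ * s) := by
      intro s
      apply π.injective
      rw [Equiv.apply_symm_apply, hπ]
      simp [mul_assoc]
    have hcond : ∀ (x : G) (y : G') (s : G),
        ((π.symm s)⁻¹ * π.symm (s * x) = y) ↔ (x = σ y) := by
      intro x y s
      rw [hsymm, hsymm]
      have : (b⁻¹ * σ.symm (a⁻¹ * s))⁻¹ * (b⁻¹ * σ.symm (a⁻¹ * (s * x)))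
          = σ.symm x := by
        rw [mul_inv_rev, inv_inv, mul_assoc, mul_inv_cancel_left, ← map_inv, ← map_mul]
        congr 1
        group
      rw [this]
      constructor
      · rintro rfl; simp
      · rintro rfl; simp
    ext x y
    rw [Dpi_apply]
    by_cases h : x = σ y
    · have : (Finset.univ.filter fun s : G => (π.symm s)⁻¹ * π.symm (s * x) = y)
          = Finset.univ := by
        refine Finset.filter_true_of_mem fun s _ => ?_
        exact (hcond x y s).mpr h
      rw [this, permMatrix]
      simp [h, Finset.card_univ, hcard, div_self hG']
    · have : (Finset.univ.filter fun s : G => (π.symm s)⁻¹ * π.symm (s * x) = y)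
          = ∅ := by
        refine Finset.filter_false_of_mem fun s _ => ?_
        exact fun hc => h ((hcond x y s).mp hc)
      rw [this, permMatrix]
      simp [h]
  refine ⟨⟨?_, ?_⟩, part2⟩
  · rintro ⟨f, hf⟩
    have key : ∀ (x s : G), (π.symm s)⁻¹ * π.symm (s * x) = f.symm x := by
      intro x s
      have h1 : Dpi π x (f.symm x) = 1 := by
        rw [hf]; simp [permMatrix]
      rw [Dpi_apply] at h1
      have hcards :
          (Finset.univ.filter fun s : G => (π.symm s)⁻¹ * π.symm (s * x) = f.symm x).card
            = Fintype.card G' := by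
        have := (div_eq_one_iff_eq hG').mp h1
        exact_mod_cast this
      have huniv : (Finset.univ.filter fun s : G =>
          (π.symm s)⁻¹ * π.symm (s * x) = f.symm x) = Finset.univ := by
        apply Finset.eq_of_subset_of_card_le (Finset.filter_subset _ _)
        rw [hcards, Finset.card_univ, hcard]
      have := huniv.ge (Finset.mem_univ s)
      exact (Finset.mem_filter.mp this).2
    have hmul : ∀ u v : G, f.symm (u * v) = f.symm u * f.symm v := by
      intro u v
      have h1 := key (u * v) 1
      have h2 := key u 1
      have h3 := key v u
      rw [one_mul] at h1 h2
      rw [← h1, ← h2, ← h3]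
      group
    set σ' : G ≃* G' := { f.symm with map_mul' := hmul } with hσ'
    refine ⟨(σ'.symm (π.symm 1))⁻¹, 1, σ'.symm, ?_⟩
    ext u
    have h := key (π u) 1
    rw [one_mul, Equiv.symm_apply_apply] at h
    have : f.symm (π u) = (π.symm 1)⁻¹ * u := h.symm
    have hu : π u = σ'.symm ((π.symm 1)⁻¹ * u) := by
      apply σ'.injective
      simpa [hσ'] using this
    simp only [Equiv.trans_apply, Equiv.coe_mulLeft, one_mul]
    rw [hu, map_mul, map_inv]
    rfl
  · rintro ⟨a, b, σ, hπ⟩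
    exact ⟨σ.toEquiv, part2 a b σ hπ⟩
end

section
/- Let G, G', and G'' be finite groups of equal order n, let Ψ = (ψ_{a,b})_{a∈G,b∈G'} be a (G,G')-invariant quantum Latin square with transformation matrix U and Ψ' = (ψ'_{b,c})_{b∈G',c∈G''} a (G',G'')-invariant quantum Latin square with transformation matrix U'. Define the composition Φ = (φ_{a,c})_{a∈G,c∈G''} by φ_{a,c} = (1/√n)·∑_{b∈G'} ψ_{a,b} ⊗ ψ'_{b,c}. Then ⟨φ_{a,c}, φ_{b,d}⟩ = (U·U')_{a⁻¹b, c⁻¹d} for all a,b ∈ G and c,d ∈ G''; every row and every column of Φ is an orthonormal basis of one common n-dimensional subspace of the tensor product space; hence Φ is a (G,G'')-invariant quantum Latin square with transformation matrix U·U'. In particular U·U' is a (G,G'')-transformation matrix. -/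
/-! Invariance and `⟪ψ ⊗ ψ', χ ⊗ χ'⟫ = ⟪ψ, χ⟫ ⟪ψ', χ'⟫` turn `⟪φ_{a,c}, φ_{b,d}⟫` into
`(1/n) ∑_{p,q} U_{a⁻¹b, p⁻¹q} U'_{p⁻¹q, c⁻¹d} = (U U')_{a⁻¹b, c⁻¹d}`.
Transformation matrices are closed under products, and the first row and column of `V = U U'`
are `δ₁`, so the rows and columns of `Φ` are orthonormal. The convolution identity
`V_{1,1} = ∑ₓ V_{a⁻¹,x} V_{a,x⁻¹}` is Parseval's identity for `φ_{a,c}` against the first row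
of `Φ`, so every entry of `Φ` lies in the span of that row, and counting dimensions all rows and columns
span it. -/

open scoped BigOperators Classical ComplexOrder

/-- A `(G,G')`-invariant quantum Latin square with entries in `ℂ^{G'}`:
every row and every column forms an orthonormal basis, and the inner product
`⟨ψ_{a,b}, ψ_{c,d}⟩` depends only on `a⁻¹c ∈ G` and `b⁻¹d ∈ G'`. -/
def IsInvQLS {G G' : Type*} [Group G] [Group G'] [Fintype G] [Fintype G']
    (ψ : G → G' → EuclideanSpace ℂ G') : Prop :=
  (∀ a : G, ∃ B : OrthonormalBasis G' ℂ (EuclideanSpace ℂ G'), ∀ b : G', B b = ψ a b) ∧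
  (∀ b : G', ∃ B : OrthonormalBasis G ℂ (EuclideanSpace ℂ G'), ∀ a : G, B a = ψ a b) ∧
  (∀ (a c a' c' : G) (b d b' d' : G'),
    a⁻¹ * c = a'⁻¹ * c' → b⁻¹ * d = b'⁻¹ * d' →
    (inner ℂ (ψ a b) (ψ c d) : ℂ) = inner ℂ (ψ a' b') (ψ c' d'))

/-- The transformation matrix of a `(G,G')`-invariant quantum Latin square:
`U_{x,y} = ⟨ψ_{a,b}, ψ_{c,d}⟩` for any `a,c ∈ G`, `b,d ∈ G'` with `a⁻¹c = x`, `b⁻¹d = y`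
(here realized with `a = e`, `b = e`). -/
noncomputable def transMat {G G' : Type*} [Group G] [Group G'] [Fintype G']
    (ψ : G → G' → EuclideanSpace ℂ G') : Matrix G G' ℂ :=
  Matrix.of fun x y => (inner ℂ (ψ 1 1) (ψ x y) : ℂ)

/-- A `(G,G')`-transformation matrix: `U` is unitary, `conj U_{a,b} = U_{a⁻¹,b⁻¹}`, and
`U_{ab,c} = ∑_{x y = c} U_{a,x} U_{b,y}`. -/
def IsTransMat {G G' : Type*} [Group G] [Group G'] [Fintype G] [Fintype G']
    [DecidableEq G] [DecidableEq G'] (U : Matrix G G' ℂ) : Prop :=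
  (U * U.conjTranspose = 1 ∧ U.conjTranspose * U = 1) ∧
  (∀ (a : G) (b : G'), star (U a b) = U a⁻¹ b⁻¹) ∧
  (∀ (a b : G) (c : G'),
    U (a * b) c = ∑ x : G', ∑ y : G', if x * y = c then U a x * U b y else 0)

/-- The composition of (the entry arrays of) two quantum Latin squares:
`φ_{a,c} = (1/√n) ∑_{b ∈ G'} ψ_{a,b} ⊗ ψ'_{b,c}`, realized inside `ℂ^{G' × G''} ≅ ℂⁿ ⊗ ℂⁿ`. -/
noncomputable def qlsComp {G G' G'' : Type*} [Fintype G']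
    (ψ : G → G' → EuclideanSpace ℂ G') (ψ' : G' → G'' → EuclideanSpace ℂ G'') :
    G → G'' → EuclideanSpace ℂ (G' × G'') :=
  fun a c => (WithLp.equiv 2 ((G' × G'') → ℂ)).symm
    (fun xy => ((Real.sqrt (Fintype.card G') : ℂ))⁻¹ * ∑ b : G', ψ a b xy.1 * ψ' b c xy.2)

theorem Finset.sum_sum_ite_mul_eq_sum_mul_inv_mul {G R : Type*} [Group G] [Fintype G]
    [DecidableEq G] [NonUnitalNonAssocSemiring R] (f g : G → R) (c : G) :
    (∑ x : G, ∑ y : G, if x * y = c then f x * g y else 0) = ∑ x : G, f x * g (x⁻¹ * c) := by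
  refine Finset.sum_congr rfl fun x _ => ?_
  simp_rw [← eq_inv_mul_iff_mul_eq]
  exact Finset.sum_ite_eq' Finset.univ _ _ |>.trans (if_pos (Finset.mem_univ _))

section InnerProductSpace

variable {𝕜 E ι : Type*} [RCLike 𝕜] [NormedAddCommGroup E] [InnerProductSpace 𝕜 E] [Fintype ι]
  {e : ι → E}

theorem Orthonormal.mem_span_range_of_sum_inner_mul_inner (he : Orthonormal 𝕜 e) {v : E}
    (hv : ∑ i, inner 𝕜 v (e i) * inner 𝕜 (e i) v = inner 𝕜 v v) :
    v ∈ Submodule.span 𝕜 (Set.range e) := by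
  set w := ∑ i, inner 𝕜 (e i) v • e i
  have hw : w ∈ Submodule.span 𝕜 (Set.range e) :=
    Submodule.sum_mem _ fun i _ => Submodule.smul_mem _ _ (Submodule.subset_span ⟨i, rfl⟩)
  suffices v = w from this ▸ hw
  rw [← sub_eq_zero, ← inner_self_eq_zero (𝕜 := 𝕜), inner_sub_sub_self, he.inner_sum]
  simp only [w, inner_sum, sum_inner, inner_smul_left, inner_smul_right, inner_conj_symm]
  simp_rw [mul_comm (inner 𝕜 (e _) v)]
  rw [hv, sub_self, zero_sub, neg_add_cancel]

theorem Orthonormal.span_range_eq_of_le (he : Orthonormal 𝕜 e) {S : Submodule 𝕜 E}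
    [FiniteDimensional 𝕜 S] (hle : ∀ i, e i ∈ S) (hdim : Module.finrank 𝕜 S ≤ Fintype.card ι) :
    Submodule.span 𝕜 (Set.range e) = S := by
  refine Submodule.eq_of_le_of_finrank_le (Submodule.span_le.mpr ?_) ?_
  · rintro _ ⟨i, rfl⟩
    exact hle i
  · rwa [finrank_span_eq_card he.linearIndependent]

end InnerProductSpace

section Kronecker

variable {𝕜 ι κ : Type*} [RCLike 𝕜] [Fintype ι] [Fintype κ]

def kronVec (v : EuclideanSpace 𝕜 ι) (w : EuclideanSpace 𝕜 κ) : EuclideanSpace 𝕜 (ι × κ) :=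
  WithLp.toLp 2 fun p => v p.1 * w p.2

theorem inner_kronVec (v v' : EuclideanSpace 𝕜 ι) (w w' : EuclideanSpace 𝕜 κ) :
    inner 𝕜 (kronVec v w) (kronVec v' w') = inner 𝕜 v v' * inner 𝕜 w w' := by
  simp only [kronVec, PiLp.inner_apply, RCLike.inner_apply, Fintype.sum_prod_type,
    map_mul, Finset.sum_mul_sum]
  exact Finset.sum_congr rfl fun _ _ => Finset.sum_congr rfl fun _ _ => by ring

theorem qlsComp_eq_smul_sum_kronVec {G G' G'' : Type*} [Fintype G'] [Fintype G'']
    (ψ : G → G' → EuclideanSpace ℂ G') (ψ' : G' → G'' → EuclideanSpace ℂ G'') (a : G) (c : G'') :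
    qlsComp ψ ψ' a c
      = ((Real.sqrt (Fintype.card G') : ℂ))⁻¹ • ∑ b : G', kronVec (ψ a b) (ψ' b c) := by
  ext xy
  simp [qlsComp, kronVec]

end Kronecker

section TransformationMatrix

variable {G G' G'' : Type*} [Group G] [Group G'] [Group G''] [Fintype G] [Fintype G']
  [Fintype G''] [DecidableEq G] [DecidableEq G'] [DecidableEq G'']

theorem IsTransMat.apply_mul {U : Matrix G G' ℂ} (hU : IsTransMat U) (a b : G) (c : G') :
    U (a * b) c = ∑ x, U a x * U b (x⁻¹ * c) :=
  (hU.2.2 a b c).trans (Finset.sum_sum_ite_mul_eq_sum_mul_inv_mul _ _ c)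

theorem IsTransMat.mul {U : Matrix G G' ℂ} {U' : Matrix G' G'' ℂ} (hU : IsTransMat U)
    (hU' : IsTransMat U') : IsTransMat (U * U') := by
  obtain ⟨⟨hUU, hUU'⟩, hUstar, -⟩ := id hU
  obtain ⟨⟨hU'U, hU'U'⟩, hU'star, -⟩ := id hU'
  refine ⟨⟨?_, ?_⟩, fun a b => ?_, fun a b c => ?_⟩
  · rw [Matrix.conjTranspose_mul, Matrix.mul_assoc, ← Matrix.mul_assoc U', hU'U, Matrix.one_mul,
      hUU]
  · rw [Matrix.conjTranspose_mul, Matrix.mul_assoc, ← Matrix.mul_assoc U.conjTranspose, hUU',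
      Matrix.one_mul, hU'U']
  · rw [Matrix.mul_apply, Matrix.mul_apply, star_sum]
    refine Fintype.sum_equiv (Equiv.inv G') _ _ fun z => ?_
    rw [star_mul', hUstar, hU'star, Equiv.inv_apply]
  · rw [Finset.sum_sum_ite_mul_eq_sum_mul_inv_mul]
    calc (U * U') (a * b) c
        = ∑ z, ∑ x, U a x * U b (x⁻¹ * z) * U' z c := by
          simp only [Matrix.mul_apply, hU.apply_mul, Finset.sum_mul]
      _ = ∑ x, ∑ y, U a x * U b y * U' (x * y) c := by
          rw [Finset.sum_comm]
          refine Finset.sum_congr rfl fun x _ => ?_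
          exact (Fintype.sum_equiv (Equiv.mulLeft x) _ _ fun y => by simp).symm
      _ = ∑ s, ∑ x, ∑ y, U a x * U' x s * (U b y * U' y (s⁻¹ * c)) := by
          simp only [hU'.apply_mul, Finset.mul_sum]
          rw [Finset.sum_comm_cycle]
          refine Finset.sum_congr rfl fun _ _ => Finset.sum_congr rfl fun _ _ =>
            Finset.sum_congr rfl fun _ _ => by ring
      _ = ∑ s, (U * U') a s * (U * U') b (s⁻¹ * c) := by
          simp only [Matrix.mul_apply, Finset.sum_mul_sum]

end TransformationMatrix

namespace IsInvQLS

variable {G G' : Type*} [Group G] [Group G'] [Fintype G'] {ψ : G → G' → EuclideanSpace ℂ G'}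

theorem transMat_apply (x : G) (y : G') : transMat ψ x y = inner ℂ (ψ 1 1) (ψ x y) := rfl

variable [Fintype G]

theorem inner_eq_transMat (hψ : IsInvQLS ψ) (a c : G) (b d : G') :
    inner ℂ (ψ a b) (ψ c d) = transMat ψ (a⁻¹ * c) (b⁻¹ * d) :=
  hψ.2.2 a c 1 (a⁻¹ * c) b d 1 (b⁻¹ * d) (by group) (by group)

theorem transMat_one_left (hψ : IsInvQLS ψ) (y : G') :
    transMat ψ 1 y = if y = 1 then 1 else 0 := by
  obtain ⟨B, hB⟩ := hψ.1 1
  rw [transMat_apply, ← hB, ← hB, orthonormal_iff_ite.mp B.orthonormal]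
  exact if_congr eq_comm rfl rfl

theorem transMat_one_right (hψ : IsInvQLS ψ) (x : G) :
    transMat ψ x 1 = if x = 1 then 1 else 0 := by
  obtain ⟨B, hB⟩ := hψ.2.1 1
  rw [transMat_apply, ← hB, ← hB, orthonormal_iff_ite.mp B.orthonormal]
  exact if_congr eq_comm rfl rfl

theorem sum_inner_mul_inner_row (hψ : IsInvQLS ψ) (a : G) (v w : EuclideanSpace ℂ G') :
    ∑ y, inner ℂ v (ψ a y) * inner ℂ (ψ a y) w = inner ℂ v w := by
  obtain ⟨B, hB⟩ := hψ.1 a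
  simpa only [hB] using B.sum_inner_mul_inner v w

theorem sum_inner_mul_inner_col (hψ : IsInvQLS ψ) (b : G') (v w : EuclideanSpace ℂ G') :
    ∑ x, inner ℂ v (ψ x b) * inner ℂ (ψ x b) w = inner ℂ v w := by
  obtain ⟨B, hB⟩ := hψ.2.1 b
  simpa only [hB] using B.sum_inner_mul_inner v w

theorem star_transMat (hψ : IsInvQLS ψ) (a : G) (b : G') :
    star (transMat ψ a b) = transMat ψ a⁻¹ b⁻¹ := by
  rw [transMat_apply, ← inner_conj_symm, hψ.inner_eq_transMat]
  simp

theorem transMat_apply_mul (hψ : IsInvQLS ψ) (a b : G) (c : G') :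
    transMat ψ (a * b) c = ∑ x, transMat ψ a x * transMat ψ b (x⁻¹ * c) := by
  rw [transMat_apply, ← hψ.sum_inner_mul_inner_row a]
  refine Finset.sum_congr rfl fun x _ => ?_
  rw [hψ.inner_eq_transMat, hψ.inner_eq_transMat]
  simp

theorem transMat_mul_conjTranspose [DecidableEq G] (hψ : IsInvQLS ψ) :
    transMat ψ * (transMat ψ).conjTranspose = 1 := by
  ext x x'
  calc (transMat ψ * (transMat ψ).conjTranspose) x x'
      = ∑ y, inner ℂ (ψ 1 1) (ψ x y) * inner ℂ (ψ x y) (ψ (x * x'⁻¹) 1) := by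
        rw [Matrix.mul_apply]
        refine Finset.sum_congr rfl fun y _ => ?_
        rw [Matrix.conjTranspose_apply, hψ.star_transMat, hψ.inner_eq_transMat,
          hψ.inner_eq_transMat]
        simp
    _ = (1 : Matrix G G ℂ) x x' := by
        rw [hψ.sum_inner_mul_inner_row, hψ.inner_eq_transMat]
        simp [hψ.transMat_one_right, Matrix.one_apply, mul_inv_eq_one]

theorem conjTranspose_mul_transMat [DecidableEq G'] (hψ : IsInvQLS ψ) :
    (transMat ψ).conjTranspose * transMat ψ = 1 := by
  ext y y'
  calc ((transMat ψ).conjTranspose * transMat ψ) y y'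
      = ∑ x, inner ℂ (ψ 1 y) (ψ x 1) * inner ℂ (ψ x 1) (ψ 1 y') := by
        rw [Matrix.mul_apply]
        refine Fintype.sum_equiv (Equiv.inv G) _ _ fun x => ?_
        rw [Matrix.conjTranspose_apply, hψ.star_transMat, Equiv.inv_apply, hψ.inner_eq_transMat,
          hψ.inner_eq_transMat]
        simp
    _ = (1 : Matrix G' G' ℂ) y y' := by
        rw [hψ.sum_inner_mul_inner_col, hψ.inner_eq_transMat]
        simp [hψ.transMat_one_left, Matrix.one_apply, inv_mul_eq_one]

theorem isTransMat_transMat [DecidableEq G] [DecidableEq G'] (hψ : IsInvQLS ψ) :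
    IsTransMat (transMat ψ) :=
  ⟨⟨hψ.transMat_mul_conjTranspose, hψ.conjTranspose_mul_transMat⟩, hψ.star_transMat,
    fun a b c => (hψ.transMat_apply_mul a b c).trans
      (Finset.sum_sum_ite_mul_eq_sum_mul_inv_mul _ _ c).symm⟩

end IsInvQLS

section Composition

variable {G G' G'' : Type*} [Group G] [Group G'] [Group G''] [Fintype G] [Fintype G']
  [Fintype G''] {ψ : G → G' → EuclideanSpace ℂ G'} {ψ' : G' → G'' → EuclideanSpace ℂ G''}

theorem inner_qlsComp (hψ : IsInvQLS ψ) (hψ' : IsInvQLS ψ') (a b : G) (c d : G'') :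
    inner ℂ (qlsComp ψ ψ' a c) (qlsComp ψ ψ' b d)
      = (transMat ψ * transMat ψ') (a⁻¹ * b) (c⁻¹ * d) := by
  have hsum : ∀ q : G', ∑ p, transMat ψ (a⁻¹ * b) (p⁻¹ * q) * transMat ψ' (p⁻¹ * q) (c⁻¹ * d)
      = (transMat ψ * transMat ψ') (a⁻¹ * b) (c⁻¹ * d) := fun q =>
    Fintype.sum_equiv ((Equiv.inv G').trans (Equiv.mulRight q)) _ _ fun _ => rfl
  have hnorm : (starRingEnd ℂ) (Real.sqrt (Fintype.card G') : ℂ)⁻¹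
      * ((Real.sqrt (Fintype.card G') : ℂ)⁻¹ * Fintype.card G') = 1 := by
    rw [map_inv₀, Complex.conj_ofReal, ← mul_assoc, ← mul_inv, ← Complex.ofReal_mul,
      Real.mul_self_sqrt (Nat.cast_nonneg _), Complex.ofReal_natCast,
      inv_mul_cancel₀ (Nat.cast_ne_zero.mpr Fintype.card_ne_zero)]
  simp only [qlsComp_eq_smul_sum_kronVec, inner_smul_left, inner_smul_right, sum_inner, inner_sum,
    inner_kronVec, hψ.inner_eq_transMat, hψ'.inner_eq_transMat, hsum, Finset.sum_const,
    Finset.card_univ, nsmul_eq_mul]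
  linear_combination (transMat ψ * transMat ψ') (a⁻¹ * b) (c⁻¹ * d) * hnorm

theorem orthonormal_qlsComp_row (hψ : IsInvQLS ψ) (hψ' : IsInvQLS ψ') (a : G) :
    Orthonormal ℂ (qlsComp ψ ψ' a) := by
  refine orthonormal_iff_ite.mpr fun c d => ?_
  rw [inner_qlsComp hψ hψ', inv_mul_cancel, Matrix.mul_apply]
  simp [hψ.transMat_one_left, hψ'.transMat_one_left, inv_mul_eq_one]

theorem orthonormal_qlsComp_col (hψ : IsInvQLS ψ) (hψ' : IsInvQLS ψ') (c : G'') :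
    Orthonormal ℂ (fun a => qlsComp ψ ψ' a c) := by
  refine orthonormal_iff_ite.mpr fun a b => ?_
  rw [inner_qlsComp hψ hψ', inv_mul_cancel, Matrix.mul_apply]
  simp [hψ.transMat_one_right, hψ'.transMat_one_right, inv_mul_eq_one]

theorem qlsComp_mem_span_row_one (hψ : IsInvQLS ψ) (hψ' : IsInvQLS ψ') (a : G) (c : G'') :
    qlsComp ψ ψ' a c ∈ Submodule.span ℂ (Set.range (qlsComp ψ ψ' 1)) := by
  refine (orthonormal_qlsComp_row hψ hψ' 1).mem_span_range_of_sum_inner_mul_inner ?_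
  simp only [inner_qlsComp hψ hψ']
  rw [(hψ.isTransMat_transMat.mul hψ'.isTransMat_transMat).apply_mul a⁻¹ a]
  exact Fintype.sum_equiv (Equiv.mulLeft c⁻¹) _ _ fun d => by simp

end Composition

/-- The composition `Φ = Ψ ∘ Ψ'` of a `(G,G')`-invariant quantum Latin
square with transformation matrix `U` and a `(G',G'')`-invariant quantum Latin square with
transformation matrix `U'` satisfies `⟨φ_{a,c}, φ_{b,d}⟩ = (U ⬝ U')_{a⁻¹b, c⁻¹d}`; every row and
every column of `Φ` is an orthonormal basis of one common `n`-dimensional subspace; and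
`U ⬝ U'` is a `(G,G'')`-transformation matrix. -/
theorem stmt9 {G G' G'' : Type*} [Group G] [Group G'] [Group G'']
    [Fintype G] [Fintype G'] [Fintype G''] [DecidableEq G] [DecidableEq G'']
    (hcard : Fintype.card G = Fintype.card G')
    (hcard' : Fintype.card G' = Fintype.card G'')
    (ψ : G → G' → EuclideanSpace ℂ G') (ψ' : G' → G'' → EuclideanSpace ℂ G'')
    (U : Matrix G G' ℂ) (U' : Matrix G' G'' ℂ)
    (hψ : IsInvQLS ψ) (hψ' : IsInvQLS ψ')
    (hU : transMat ψ = U) (hU' : transMat ψ' = U') :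
    (∀ (a b : G) (c d : G''),
      (inner ℂ (qlsComp ψ ψ' a c) (qlsComp ψ ψ' b d) : ℂ) = (U * U') (a⁻¹ * b) (c⁻¹ * d)) ∧
    (∃ S : Submodule ℂ (EuclideanSpace ℂ (G' × G'')),
      Module.finrank ℂ ↥S = Fintype.card G ∧
      (∀ a : G, Orthonormal ℂ (fun c : G'' => qlsComp ψ ψ' a c) ∧
        Submodule.span ℂ (Set.range fun c : G'' => qlsComp ψ ψ' a c) = S) ∧
      (∀ c : G'', Orthonormal ℂ (fun a : G => qlsComp ψ ψ' a c) ∧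
        Submodule.span ℂ (Set.range fun a : G => qlsComp ψ ψ' a c) = S)) ∧
    IsTransMat (U * U') := by
  subst hU hU'
  have hrow := orthonormal_qlsComp_row hψ hψ'
  have hcol := orthonormal_qlsComp_col hψ hψ'
  have hmem := qlsComp_mem_span_row_one hψ hψ'
  set S := Submodule.span ℂ (Set.range (qlsComp ψ ψ' 1))
  have hS : Module.finrank ℂ S = Fintype.card G'' := finrank_span_eq_card (hrow 1).linearIndependent
  refine ⟨inner_qlsComp hψ hψ', ⟨S, by rw [hS, hcard, hcard'], fun a => ⟨hrow a, ?_⟩,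
    fun c => ⟨hcol c, ?_⟩⟩, hψ.isTransMat_transMat.mul hψ'.isTransMat_transMat⟩
  · exact (hrow a).span_range_eq_of_le (hmem a) hS.le
  · exact (hcol c).span_range_eq_of_le (hmem · c) (by rw [hS, hcard, hcard'])
end

section
/- Let G and G' be finite groups of equal order and let U be a (G,G')-transformation matrix. Let S ⊆ G be the set of all a ∈ G whose row U_{a,·} has exactly one nonzero entry, and S' ⊆ G' the set of all b ∈ G' whose column U_{·,b} has exactly one nonzero entry. Define σ : S → S' by letting σ(a) be the unique b with U_{a,b} ≠ 0, and set χ(a) = U_{a,σ(a)} for a ∈ S and χ'(b) = U_{σ⁻¹(b),b} for b ∈ S'. Then S and S' are subgroups of G and G' respectively, σ is a group isomorphism from S to S', and χ and χ' are linear characters of S and S' respectively (i.e., group homomorphisms into the complex numbers of modulus 1). -/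
open scoped BigOperators Classical

/-- A quasi-regular representation of `G` by `d × d` complex matrices: a group
homomorphism into the unitary matrices with `tr(ρ(g)† ρ(h)) = 0` for all `g ≠ h`,
where `tr` is the normalized trace `Tr(M)/d`. -/
def IsQuasiRegular (G : Type*) [Group G] (d : ℕ)
    (ρ : G → Matrix (Fin d) (Fin d) ℂ) : Prop :=
  (ρ 1 = 1) ∧
  (∀ g h : G, ρ (g * h) = ρ g * ρ h) ∧
  (∀ g : G, (ρ g).conjTranspose * ρ g = 1 ∧ ρ g * (ρ g).conjTranspose = 1) ∧
  (∀ g h : G, g ≠ h → Matrix.trace ((ρ g).conjTranspose * ρ h) / (d : ℂ) = 0)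

/-! Unitarity makes every row and every column of `U` a unit vector, so a row (column) has
exactly one nonzero entry iff it has an entry of modulus one, and that entry is then also the only
nonzero entry of its column (row). If `‖U a b‖ = 1`, the convolution identity collapses to
`U (a * a') (b * b') = U a b * U a' b'`; with `U 1 1 = 1` and `U a⁻¹ b⁻¹ = conj (U a b)` this makes
the positions of the modulus-one entries a subgroup of `G × G'`. Both projections are injective on
it, so it is the graph of an isomorphism `σ : S ≃* S'` between its images, and the collapsed
identity says that `χ` and `χ'` are multiplicative. -/

theorem norm_eq_one_iff_forall_ne_eq_zero {ι E : Type*} [Fintype ι] [DecidableEq ι]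
    [NormedAddCommGroup E] {f : ι → E} (hf : ∑ i, ‖f i‖ ^ 2 = 1) (i : ι) :
    ‖f i‖ = 1 ↔ ∀ j ≠ i, f j = 0 := by
  rw [← Finset.add_sum_erase _ _ (Finset.mem_univ i)] at hf
  have hrest : ‖f i‖ = 1 ↔ ∑ j ∈ Finset.univ.erase i, ‖f j‖ ^ 2 = 0 := by
    rw [← pow_eq_one_iff_of_nonneg (norm_nonneg _) two_ne_zero]
    constructor <;> intro h <;> linarith
  rw [hrest, Finset.sum_eq_zero_iff_of_nonneg (fun j _ => by positivity)]
  simp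

theorem existsUnique_ne_zero_iff_exists_norm_eq_one {ι E : Type*} [Fintype ι] [DecidableEq ι]
    [NormedAddCommGroup E] {f : ι → E} (hf : ∑ i, ‖f i‖ ^ 2 = 1) :
    (∃! i, f i ≠ 0) ↔ ∃ i, ‖f i‖ = 1 := by
  simp_rw [norm_eq_one_iff_forall_ne_eq_zero hf]
  constructor
  · rintro ⟨i, -, huniq⟩
    exact ⟨i, fun j hj => not_not.mp fun h => hj (huniq j h)⟩
  · rintro ⟨i, hzero⟩
    have hi : f i ≠ 0 := by
      intro h
      have : ∀ j, f j = 0 := fun j => (eq_or_ne j i).elim (· ▸ h) (hzero j)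
      simp [this] at hf
    exact ⟨i, hi, fun j hj => not_not.mp fun h => hj (hzero j h)⟩

theorem eq_of_norm_eq_one_of_norm_eq_one {ι E : Type*} [Fintype ι] [DecidableEq ι]
    [NormedAddCommGroup E] {f : ι → E} (hf : ∑ i, ‖f i‖ ^ 2 = 1) {i j : ι} (hi : ‖f i‖ = 1)
    (hj : ‖f j‖ = 1) : i = j := by
  by_contra hne
  simp [(norm_eq_one_iff_forall_ne_eq_zero hf i).1 hi j (Ne.symm hne)] at hj

namespace IsTransMat

variable {G G' : Type*} [Group G] [Group G'] [Fintype G] [Fintype G']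
    [DecidableEq G] [DecidableEq G'] {U : Matrix G G' ℂ}

theorem sum_sq_norm_row (hU : IsTransMat U) (a : G) : ∑ b, ‖U a b‖ ^ 2 = 1 := by
  have h := congrFun (congrFun hU.1.1 a) a
  simp only [Matrix.mul_apply, Matrix.one_apply_eq, Matrix.conjTranspose_apply,
    Complex.star_def, Complex.mul_conj'] at h
  exact_mod_cast h

theorem sum_sq_norm_col (hU : IsTransMat U) (b : G') : ∑ a, ‖U a b‖ ^ 2 = 1 := by
  have h := congrFun (congrFun hU.1.2 b) b
  simp only [Matrix.mul_apply, Matrix.one_apply_eq, Matrix.conjTranspose_apply,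
    Complex.star_def, Complex.conj_mul'] at h
  exact_mod_cast h

theorem apply_mul_s17 (hU : IsTransMat U) (a a' : G) (c : G') :
    U (a * a') c = ∑ b, U a b * U a' (b⁻¹ * c) := by
  simp_rw [hU.2.2, ← eq_inv_mul_iff_mul_eq, Finset.sum_ite_eq', Finset.mem_univ, if_true]

theorem apply_one_one (hU : IsTransMat U) : U 1 1 = 1 := by
  have hconj (b : G') : U 1 b⁻¹ = star (U 1 b) := by simpa using (hU.2.1 1 b).symm
  have h := hU.apply_mul_s17 1 1 1
  simp_rw [mul_one, hconj, Complex.star_def, Complex.mul_conj'] at h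
  rw [h]
  exact_mod_cast hU.sum_sq_norm_row 1

theorem apply_mul_of_norm_eq_one (hU : IsTransMat U) {a : G} {b : G'} (hab : ‖U a b‖ = 1)
    (a' : G) (c : G') : U (a * a') c = U a b * U a' (b⁻¹ * c) := by
  rw [hU.apply_mul_s17, Finset.sum_eq_single b]
  · intro b' _ hb'
    rw [(norm_eq_one_iff_forall_ne_eq_zero (hU.sum_sq_norm_row a) b).1 hab b' hb', zero_mul]
  · simp

theorem apply_mul_mul (hU : IsTransMat U) {a a' : G} {b b' : G'} (hab : ‖U a b‖ = 1) :
    U (a * a') (b * b') = U a b * U a' b' := by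
  rw [hU.apply_mul_of_norm_eq_one hab, inv_mul_cancel_left]

def unitEntries (hU : IsTransMat U) : Subgroup (G × G') where
  carrier := {p | ‖U p.1 p.2‖ = 1}
  one_mem' := by simp [hU.apply_one_one]
  mul_mem' {p q} (hp : ‖U p.1 p.2‖ = 1) (hq : ‖U q.1 q.2‖ = 1) :=
    show ‖U (p.1 * q.1) (p.2 * q.2)‖ = 1 by rw [hU.apply_mul_mul hp, norm_mul, hp, hq, one_mul]
  inv_mem' {p} hp := by
    simpa [← hU.2.1] using hp

theorem fst_comp_subtype_injective (hU : IsTransMat U) :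
    Function.Injective ((MonoidHom.fst G G').comp hU.unitEntries.subtype) := by
  rintro ⟨⟨a, b⟩, hab⟩ ⟨⟨a', b'⟩, hab'⟩ (rfl : a = a')
  obtain rfl := eq_of_norm_eq_one_of_norm_eq_one (hU.sum_sq_norm_row a) hab hab'
  rfl

theorem snd_comp_subtype_injective (hU : IsTransMat U) :
    Function.Injective ((MonoidHom.snd G G').comp hU.unitEntries.subtype) := by
  rintro ⟨⟨a, b⟩, hab⟩ ⟨⟨a', b'⟩, hab'⟩ (rfl : b = b')
  obtain rfl := eq_of_norm_eq_one_of_norm_eq_one (hU.sum_sq_norm_col b) hab hab'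
  rfl

def rowSubgroup (hU : IsTransMat U) : Subgroup G :=
  ((MonoidHom.fst G G').comp hU.unitEntries.subtype).range

def colSubgroup (hU : IsTransMat U) : Subgroup G' :=
  ((MonoidHom.snd G G').comp hU.unitEntries.subtype).range

theorem coe_rowSubgroup (hU : IsTransMat U) :
    (hU.rowSubgroup : Set G) = {a | ∃! b, U a b ≠ 0} := by
  ext a
  rw [Set.mem_ofPred_eq, existsUnique_ne_zero_iff_exists_norm_eq_one (hU.sum_sq_norm_row a)]
  constructor
  · rintro ⟨⟨⟨a, b⟩, hab⟩, rfl⟩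
    exact ⟨b, hab⟩
  · rintro ⟨b, hab⟩
    exact ⟨⟨(a, b), hab⟩, rfl⟩

theorem coe_colSubgroup (hU : IsTransMat U) :
    (hU.colSubgroup : Set G') = {b | ∃! a, U a b ≠ 0} := by
  ext b
  rw [Set.mem_ofPred_eq, existsUnique_ne_zero_iff_exists_norm_eq_one (hU.sum_sq_norm_col b)]
  constructor
  · rintro ⟨⟨⟨a, b⟩, hab⟩, rfl⟩
    exact ⟨a, hab⟩
  · rintro ⟨a, hab⟩
    exact ⟨⟨(a, b), hab⟩, rfl⟩

noncomputable def monomialEquiv (hU : IsTransMat U) : hU.rowSubgroup ≃* hU.colSubgroup :=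
  (MonoidHom.ofInjective hU.fst_comp_subtype_injective).symm.trans
    (MonoidHom.ofInjective hU.snd_comp_subtype_injective)

theorem norm_apply_monomialEquiv (hU : IsTransMat U) (a : hU.rowSubgroup) :
    ‖U a (hU.monomialEquiv a)‖ = 1 := by
  set p := (MonoidHom.ofInjective hU.fst_comp_subtype_injective).symm a
  have hfst : (a : G) = (p : G × G').1 := by
    conv_lhs => rw [← (MonoidHom.ofInjective hU.fst_comp_subtype_injective).apply_symm_apply a]
    rfl
  rw [hfst]
  exact p.2

theorem norm_apply_monomialEquiv_symm (hU : IsTransMat U) (b : hU.colSubgroup) :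
    ‖U (hU.monomialEquiv.symm b) b‖ = 1 := by
  simpa using hU.norm_apply_monomialEquiv (hU.monomialEquiv.symm b)

end IsTransMat

theorem stmt17_general {G G' : Type*} [Group G] [Group G'] [Fintype G] [Fintype G']
    [DecidableEq G] [DecidableEq G']
    (U : Matrix G G' ℂ) (hU : IsTransMat U) :
    ∃ (S : Subgroup G) (S' : Subgroup G') (σ : S ≃* S'),
      ((S : Set G) = {a : G | ∃! b : G', U a b ≠ 0}) ∧
      ((S' : Set G') = {b : G' | ∃! a : G, U a b ≠ 0}) ∧
      (∀ a : S, U (a : G) ((σ a : G')) ≠ 0) ∧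
      (∀ a b : S,
        U ((a * b : S) : G) ((σ (a * b) : G')) = U (a : G) (σ a : G') * U (b : G) (σ b : G')) ∧
      (∀ a : S, ‖U (a : G) (σ a : G')‖ = 1) ∧
      (∀ b c : S',
        U ((σ.symm (b * c) : G)) (((b * c : S') : G')) =
          U (σ.symm b : G) (b : G') * U (σ.symm c : G) (c : G')) ∧
      (∀ b : S', ‖U (σ.symm b : G) (b : G')‖ = 1) := by
  refine ⟨hU.rowSubgroup, hU.colSubgroup, hU.monomialEquiv, hU.coe_rowSubgroup,
    hU.coe_colSubgroup, fun a => ?_, fun a b => ?_, hU.norm_apply_monomialEquiv, fun b c => ?_,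
    hU.norm_apply_monomialEquiv_symm⟩
  · exact ne_zero_of_norm_ne_zero (by rw [hU.norm_apply_monomialEquiv]; exact one_ne_zero)
  · rw [map_mul, Subgroup.coe_mul, Subgroup.coe_mul]
    exact hU.apply_mul_mul (hU.norm_apply_monomialEquiv a)
  · rw [map_mul, Subgroup.coe_mul, Subgroup.coe_mul]
    exact hU.apply_mul_mul (hU.norm_apply_monomialEquiv_symm b)

/-- For a `(G,G')`-transformation matrix `U`, the row indices with a
single nonzero entry form a subgroup `S ≤ G`, the column indices with a single nonzero
entry form a subgroup `S' ≤ G'`, the assignment `σ(a) :=` (the unique `b` with `U_{a,b} ≠ 0`)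
is a group isomorphism from `S` to `S'`, and `χ(a) = U_{a,σ(a)}` and `χ'(b) = U_{σ⁻¹(b),b}`
are linear characters of `S` and `S'` (group homomorphisms into the unit circle). -/
theorem stmt17 {G G' : Type*} [Group G] [Group G'] [Fintype G] [Fintype G']
    [DecidableEq G] [DecidableEq G']
    (hcard : Fintype.card G = Fintype.card G')
    (U : Matrix G G' ℂ) (hU : IsTransMat U) :
    ∃ (S : Subgroup G) (S' : Subgroup G') (σ : S ≃* S'),
      ((S : Set G) = {a : G | ∃! b : G', U a b ≠ 0}) ∧
      ((S' : Set G') = {b : G' | ∃! a : G, U a b ≠ 0}) ∧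
      (∀ a : S, U (a : G) ((σ a : G')) ≠ 0) ∧
      (∀ a b : S,
        U ((a * b : S) : G) ((σ (a * b) : G')) = U (a : G) (σ a : G') * U (b : G) (σ b : G')) ∧
      (∀ a : S, ‖U (a : G) (σ a : G')‖ = 1) ∧
      (∀ b c : S',
        U ((σ.symm (b * c) : G)) (((b * c : S') : G')) =
          U (σ.symm b : G) (b : G') * U (σ.symm c : G) (c : G')) ∧
      (∀ b : S', ‖U (σ.symm b : G) (b : G')‖ = 1) :=
  stmt17_general U hU
end
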